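/- arXiv:1902.07460 — 4 statements merged into one kernel-verified Lean document; each statement's English description precedes it below -/
import Mathlib

section
/- Let R be a ring, A an R-algebra, I an ideal of A such that A/I is a finitely generated R-module, and M a finitely generated A-module. If the associated graded module gr_I(M) is flat over R, then for every finitely generated R-module N and every n ≥ 0, the canonical map (I^n M) ⊗_R N → I^n (M ⊗_R N) is an isomorphism of A-modules. -/
/-!
Tensoring `0 → Iⁿ⁺¹M → IⁿM → IⁿM/Iⁿ⁺¹M → 0` with `N` keeps it left exact because the cokernel
is flat, so by induction from `I⁰M = M` every `IⁿM ⊗ N → M ⊗ N` is injective. Its image is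
spanned by the tensors `(a • m) ⊗ y = a • (m ⊗ y)` with `a ∈ Iⁿ`, which span `Iⁿ(M ⊗ N)`.
-/

open TensorProduct LinearMap

namespace Submodule

section Flat

variable {R M : Type*} [CommRing R] [AddCommGroup M] [Module R M]
  (N : Type*) [AddCommGroup N] [Module R N]

theorem rTensor_subtype_injective_of_flat_quotient (K : Submodule R M) [Module.Flat R (M ⧸ K)] :
    Function.Injective (K.subtype.rTensor N) :=
  (lTensor_inj_iff_rTensor_inj N K.subtype).mp <|
    lTensor_injective_of_exact_of_flat K.mkQ K.mkQ_surjective K.subtype K.injective_subtype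
      (exact_subtype_mkQ K) N

theorem rTensor_subtype_injective_of_le {p q : Submodule R M} (hpq : p ≤ q)
    [Module.Flat R (q ⧸ comap q.subtype p)] (hq : Function.Injective (q.subtype.rTensor N)) :
    Function.Injective (p.subtype.rTensor N) := by
  have hp : p.subtype = q.subtype ∘ₗ (comap q.subtype p).subtype ∘ₗ
      (comapSubtypeEquivOfLe hpq).symm.toLinearMap := rfl
  rw [hp, rTensor_comp, rTensor_comp]
  exact hq.comp <| (rTensor_subtype_injective_of_flat_quotient N _).comp
    (LinearEquiv.rTensor N _).injective

theorem rTensor_subtype_injective_of_flat_subquotients (F : ℕ → Submodule R M) (h0 : F 0 = ⊤)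
    (hF : Antitone F) (hflat : ∀ n, Module.Flat R (F n ⧸ comap (F n).subtype (F (n + 1))))
    (n : ℕ) : Function.Injective ((F n).subtype.rTensor N) := by
  induction n with
  | zero => rw [h0]; exact (LinearEquiv.rTensor N topEquiv).injective
  | succ n ih =>
    have := hflat n
    exact rTensor_subtype_injective_of_le N (hF n.le_succ) ih

end Flat

section SmulTop

variable {R A M : Type*} [CommSemiring R] [CommSemiring A] [Algebra R A]
  [AddCommMonoid M] [Module A M] [Module R M] [IsScalarTower R A M]
  (N : Type*) [AddCommMonoid N] [Module R N] (J : Ideal A)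

theorem tmul_mem_smul_top {m : M} (hm : m ∈ J • (⊤ : Submodule A M)) (n : N) :
    m ⊗ₜ[R] n ∈ J • (⊤ : Submodule A (M ⊗[R] N)) :=
  smul_induction_on hm (fun a ha m _ ↦ by rw [← smul_tmul']; exact smul_mem_smul ha mem_top)
    (fun _ _ h₁ h₂ ↦ by rw [add_tmul]; exact add_mem h₁ h₂)

theorem range_rTensor_subtype_smul_top :
    range (((J • ⊤ : Submodule A M).restrictScalars R).subtype.rTensor N) =
      (J • ⊤ : Submodule A (M ⊗[R] N)).restrictScalars R := by
  apply le_antisymm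
  · rintro _ ⟨t, rfl⟩
    induction t using TensorProduct.induction_on with
    | zero => simp
    | tmul m n => exact tmul_mem_smul_top N J m.2 n
    | add t₁ t₂ h₁ h₂ => rw [map_add]; exact add_mem h₁ h₂
  · have smul_mem_range (a : A) (ha : a ∈ J) (s : M ⊗[R] N) :
        a • s ∈ range (((J • ⊤ : Submodule A M).restrictScalars R).subtype.rTensor N) := by
      induction s using TensorProduct.induction_on with
      | zero => simp
      | tmul m n =>
        have ham : a • m ∈ (J • ⊤ : Submodule A M).restrictScalars R :=
          (restrictScalars_mem R _ _).mpr (smul_mem_smul ha mem_top)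
        exact ⟨⟨a • m, ham⟩ ⊗ₜ n, by rw [rTensor_tmul, subtype_apply, smul_tmul']⟩
      | add s₁ s₂ h₁ h₂ => rw [smul_add]; exact add_mem h₁ h₂
    intro t ht
    exact smul_induction_on ((restrictScalars_mem R _ _).mp ht)
      (fun a ha s _ ↦ smul_mem_range a ha s) (fun _ _ ↦ add_mem)

end SmulTop

end Submodule

theorem graded_flat_tensor_iso_general
    (R A M N : Type*) [CommRing R] [CommRing A] [Algebra R A]
    [AddCommGroup M] [Module A M] [Module R M] [IsScalarTower R A M]
    [AddCommGroup N] [Module R N]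
    (I : Ideal A)
    (hflat : ∀ n : ℕ, Module.Flat R
      (↥((I ^ n • (⊤ : Submodule A M)).restrictScalars R) ⧸
        Submodule.comap ((I ^ n • (⊤ : Submodule A M)).restrictScalars R).subtype
          ((I ^ (n + 1) • (⊤ : Submodule A M)).restrictScalars R)))
    (n : ℕ) :
    Function.Injective
      (TensorProduct.map (((I ^ n • (⊤ : Submodule A M)).restrictScalars R).subtype)
        (LinearMap.id (R := R) (M := N))) ∧
    LinearMap.range
      (TensorProduct.map (((I ^ n • (⊤ : Submodule A M)).restrictScalars R).subtype)
        (LinearMap.id (R := R) (M := N)))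
      = (I ^ n • (⊤ : Submodule A (M ⊗[R] N))).restrictScalars R :=
  ⟨Submodule.rTensor_subtype_injective_of_flat_subquotients N
      (fun n ↦ (I ^ n • ⊤ : Submodule A M).restrictScalars R) (by simp)
      (fun _ _ h ↦ Submodule.restrictScalars_mono R (Submodule.pow_smul_top_le I M h)) hflat n,
    Submodule.range_rTensor_subtype_smul_top N (I ^ n)⟩

/-- Lemma on isomorphism `(IⁿM) ⊗_R N ≅ Iⁿ(M ⊗_R N)`: if `A/I` is a finite `R`-module, `M` a
finite `A`-module with `gr_I(M)` flat over `R` (i.e. every graded piece `IⁿM/Iⁿ⁺¹M` is a flat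
`R`-module), then for every finite `R`-module `N` and every `n`, the canonical map
`(IⁿM) ⊗_R N → M ⊗_R N` is injective with image `Iⁿ(M ⊗_R N)`; that is, it induces an
isomorphism `(IⁿM) ⊗_R N ≅ Iⁿ(M ⊗_R N)`. -/
theorem graded_flat_tensor_iso
    (R A M N : Type*) [CommRing R] [CommRing A] [Algebra R A]
    [IsNoetherianRing R] [IsNoetherianRing A]
    [AddCommGroup M] [Module A M] [Module R M] [IsScalarTower R A M]
    [AddCommGroup N] [Module R N]
    (I : Ideal A) (hfinq : Module.Finite R (A ⧸ I)) [Module.Finite A M]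
    (hflat : ∀ n : ℕ, Module.Flat R
      (↥((I ^ n • (⊤ : Submodule A M)).restrictScalars R) ⧸
        Submodule.comap ((I ^ n • (⊤ : Submodule A M)).restrictScalars R).subtype
          ((I ^ (n + 1) • (⊤ : Submodule A M)).restrictScalars R)))
    [Module.Finite R N] (n : ℕ) :
    Function.Injective
      (TensorProduct.map (((I ^ n • (⊤ : Submodule A M)).restrictScalars R).subtype)
        (LinearMap.id (R := R) (M := N))) ∧
    LinearMap.range
      (TensorProduct.map (((I ^ n • (⊤ : Submodule A M)).restrictScalars R).subtype)
        (LinearMap.id (R := R) (M := N)))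
      = (I ^ n • (⊤ : Submodule A (M ⊗[R] N))).restrictScalars R :=
  graded_flat_tensor_iso_general R A M N I hflat n
end

section
/- Let R be a ring, A an R-algebra, I an ideal of A such that A/I is a finitely generated R-module, and M a finitely generated A-module with gr_I(M) flat over R. Then for every finitely generated R-module N and every n ≥ 0, the sequence 0 → I^{n+1}M ⊗_R N → I^n M ⊗_R N → (I^n M / I^{n+1} M) ⊗_R N → 0 is exact. -/
/-! `0 → Iⁿ⁺¹M → IⁿM → IⁿM/Iⁿ⁺¹M → 0` is a short exact sequence of `R`-modules whose cokernel is
flat, and tensoring such a sequence with any module keeps it exact: right exactness is general,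
and injectivity on the left is the vanishing of `Tor₁` against a flat module. -/

theorem LinearMap.rTensor_injective_of_exact_of_flat {R M N P : Type*} [CommRing R]
    [AddCommGroup M] [Module R M] [AddCommGroup N] [Module R N]
    [AddCommGroup P] [Module R P] [Module.Flat R P]
    {g : M →ₗ[R] N} {f : N →ₗ[R] P} (hg : Function.Injective g) (hf : Function.Surjective f)
    (H : Function.Exact g f) (Q : Type*) [AddCommGroup Q] [Module R Q] :
    Function.Injective (g.rTensor Q) :=
  (lTensor_inj_iff_rTensor_inj Q g).mp (f.lTensor_injective_of_exact_of_flat hf g hg H Q)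

theorem LinearMap.rTensor_shortExact_of_flat {R M N P : Type*} [CommRing R]
    [AddCommGroup M] [Module R M] [AddCommGroup N] [Module R N]
    [AddCommGroup P] [Module R P] [Module.Flat R P]
    {g : M →ₗ[R] N} {f : N →ₗ[R] P} (hg : Function.Injective g) (hf : Function.Surjective f)
    (H : Function.Exact g f) (Q : Type*) [AddCommGroup Q] [Module R Q] :
    Function.Injective (g.rTensor Q) ∧ Function.Exact (g.rTensor Q) (f.rTensor Q) ∧
      Function.Surjective (f.rTensor Q) :=
  ⟨rTensor_injective_of_exact_of_flat hg hf H Q, rTensor_exact Q H hf, rTensor_surjective Q hf⟩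

theorem Submodule.exact_inclusion_mkQ_comap_subtype {R M : Type*} [Ring R] [AddCommGroup M]
    [Module R M] {S T : Submodule R M} (h : S ≤ T) :
    Function.Exact (Submodule.inclusion h) (Submodule.comap T.subtype S).mkQ := by
  rw [LinearMap.exact_iff, Submodule.ker_mkQ, Submodule.range_inclusion]

/-- If `A/I` is a finite `R`-module and `M` is a finite `A`-module with `gr_I(M)` flat over `R`
(i.e. every graded piece `IⁿM/Iⁿ⁺¹M` is `R`-flat), then for every finite `R`-module `N` and
every `n`, the sequence
`0 → Iⁿ⁺¹M ⊗_R N → IⁿM ⊗_R N → (IⁿM/Iⁿ⁺¹M) ⊗_R N → 0` is exact. -/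
theorem graded_flat_tensor_exact
    (R A M N : Type*) [CommRing R] [CommRing A] [Algebra R A]
    [AddCommGroup M] [Module A M] [Module R M] [IsScalarTower R A M]
    [AddCommGroup N] [Module R N]
    (I : Ideal A)
    (hflat : ∀ m : ℕ, Module.Flat R
      (↥((I ^ m • (⊤ : Submodule A M)).restrictScalars R) ⧸
        Submodule.comap ((I ^ m • (⊤ : Submodule A M)).restrictScalars R).subtype
          ((I ^ (m + 1) • (⊤ : Submodule A M)).restrictScalars R)))
    (n : ℕ) :
    Function.Injective
      (TensorProduct.map
        (Submodule.inclusion (by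
          exact Submodule.restrictScalars_mono R (Submodule.smul_mono_left (Ideal.pow_le_pow_right n.le_succ)) :
            (I ^ (n + 1) • (⊤ : Submodule A M)).restrictScalars R ≤
              (I ^ n • (⊤ : Submodule A M)).restrictScalars R))
        (LinearMap.id (R := R) (M := N))) ∧
    Function.Exact
      (TensorProduct.map
        (Submodule.inclusion (by
          exact Submodule.restrictScalars_mono R (Submodule.smul_mono_left (Ideal.pow_le_pow_right n.le_succ)) :
            (I ^ (n + 1) • (⊤ : Submodule A M)).restrictScalars R ≤
              (I ^ n • (⊤ : Submodule A M)).restrictScalars R))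
        (LinearMap.id (R := R) (M := N)))
      (TensorProduct.map
        (Submodule.mkQ (Submodule.comap
          ((I ^ n • (⊤ : Submodule A M)).restrictScalars R).subtype
          ((I ^ (n + 1) • (⊤ : Submodule A M)).restrictScalars R)))
        (LinearMap.id (R := R) (M := N))) ∧
    Function.Surjective
      (TensorProduct.map
        (Submodule.mkQ (Submodule.comap
          ((I ^ n • (⊤ : Submodule A M)).restrictScalars R).subtype
          ((I ^ (n + 1) • (⊤ : Submodule A M)).restrictScalars R)))
        (LinearMap.id (R := R) (M := N))) := by
  have hle : (I ^ (n + 1) • (⊤ : Submodule A M)).restrictScalars R ≤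
      (I ^ n • (⊤ : Submodule A M)).restrictScalars R :=
    Submodule.restrictScalars_mono R (Submodule.smul_mono_left (Ideal.pow_le_pow_right n.le_succ))
  have := hflat n
  exact LinearMap.rTensor_shortExact_of_flat (Submodule.inclusion_injective hle)
    (Submodule.mkQ_surjective _) (Submodule.exact_inclusion_mkQ_comap_subtype hle) N
end

section
/- Let N be a finitely generated module over a Noetherian commutative ring R. The function on Spec R sending a prime p to dim_{k(p)} N ⊗_R k(p) (the minimal number of generators of N_p) is upper semicontinuous: for every integer m, the set {p ∈ Spec R : dim_{k(p)} N ⊗_R k(p) < m} is open. -/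
/-!
Choose `g₁, …, gₙ ∈ N`, `n = dim k(p) ⊗ N`, whose images span `k(p) ⊗ N`, and let
`Q = N ⧸ ⟨g₁, …, gₙ⟩`. By right exactness of `k(q) ⊗ -`, the images of the `gᵢ` span
`k(q) ⊗ N` exactly when `k(q) ⊗ Q = 0`, i.e. when `q` lies outside the support of `Q`.
That support is closed (the zero locus of the annihilator of the finite module `Q`) and
misses `p`, so `dim k(q) ⊗ N ≤ n` on an open neighbourhood of `p`.
-/

open TensorProduct

/-- The residue field `k(p)` of a prime `p` of `R`. -/
noncomputable abbrev residueFieldAt {R : Type*} [CommRing R] (p : PrimeSpectrum R) :=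
  IsLocalRing.ResidueField (Localization.AtPrime p.asIdeal)

open Submodule Module

section

variable {R A M : Type*} [CommRing R] [CommRing A] [Algebra R A] [AddCommGroup M] [Module R M]

theorem Submodule.baseChange_eq_top_iff_subsingleton_tensorProduct_quotient (S : Submodule R M) :
    S.baseChange A = ⊤ ↔ Subsingleton (A ⊗[R] (M ⧸ S)) := by
  rw [(tensorQuotientEquiv A S).toEquiv.subsingleton_congr, Submodule.Quotient.subsingleton_iff,
    ← restrictScalars_eq_top_iff R]
  rfl

variable {K : Type*} [Field K] [Algebra R K]

theorem finrank_tensorProduct_le_of_baseChange_span_eq_top {ι : Type*} [Fintype ι] {g : ι → M}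
    (hg : (span R (Set.range g)).baseChange K = ⊤) :
    finrank K (K ⊗[R] M) ≤ Fintype.card ι := by
  rw [baseChange_span, ← Set.range_comp] at hg
  rw [← finrank_top, ← hg]
  exact finrank_range_le_card _

theorem exists_fin_finrank_baseChange_span_eq_top [Module.Finite R M] :
    ∃ g : Fin (finrank K (K ⊗[R] M)) → M, (span R (Set.range g)).baseChange K = ⊤ := by
  have hspan : span K (Set.range (TensorProduct.mk R K M 1)) = ⊤ := by
    rw [← LinearMap.coe_range, ← Submodule.map_top, ← baseChange_eq_span, baseChange_top]
  rw [← finrank_top, ← hspan]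
  obtain ⟨f, hf, hfspan, -⟩ :=
    exists_fun_fin_finrank_span_eq K (Set.range (TensorProduct.mk R K M 1))
  choose g hg using hf
  refine ⟨g, ?_⟩
  rw [baseChange_span, ← Set.range_comp]
  exact (congrArg (span K ∘ Set.range) (funext hg)).trans hfspan

end

theorem isOpen_setOf_baseChange_residueField_eq_top {R M : Type*} [CommRing R] [AddCommGroup M]
    [Module R M] [Module.Finite R M] (S : Submodule R M) :
    IsOpen {p : PrimeSpectrum R | S.baseChange (residueFieldAt p) = ⊤} := by
  have hsupport :
      {p : PrimeSpectrum R | S.baseChange (residueFieldAt p) = ⊤} = (support R (M ⧸ S))ᶜ := by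
    ext p
    simp [S.baseChange_eq_top_iff_subsingleton_tensorProduct_quotient,
      mem_support_iff_nontrivial_residueField_tensorProduct, not_nontrivial_iff_subsingleton]
  rw [hsupport, support_eq_zeroLocus]
  exact (PrimeSpectrum.isClosed_zeroLocus _).isOpen_compl

theorem minimal_generators_upper_semicontinuous_general
    (R N : Type*) [CommRing R]
    [AddCommGroup N] [Module R N] [Module.Finite R N] (m : ℕ) :
    IsOpen {p : PrimeSpectrum R |
      Module.finrank (residueFieldAt p) (residueFieldAt p ⊗[R] N) < m} := by
  refine isOpen_iff_forall_mem_open.mpr fun p hp ↦ ?_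
  obtain ⟨g, hg⟩ :=
    exists_fin_finrank_baseChange_span_eq_top (R := R) (K := residueFieldAt p) (M := N)
  refine ⟨{q | (span R (Set.range g)).baseChange (residueFieldAt q) = ⊤}, fun q hq ↦ ?_,
    isOpen_setOf_baseChange_residueField_eq_top _, hg⟩
  exact (finrank_tensorProduct_le_of_baseChange_span_eq_top hq).trans_lt (by simpa using hp)

/-- For a finitely generated module `N` over a Noetherian ring `R`, the function
`p ↦ dim_{k(p)} N ⊗_R k(p)` (the minimal number of generators of `N_p`) is upper
semicontinuous on `Spec R`. -/
theorem minimal_generators_upper_semicontinuous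
    (R N : Type*) [CommRing R] [IsNoetherianRing R]
    [AddCommGroup N] [Module R N] [Module.Finite R N] (m : ℕ) :
    IsOpen {p : PrimeSpectrum R |
      Module.finrank (residueFieldAt p) (residueFieldAt p ⊗[R] N) < m} :=
  minimal_generators_upper_semicontinuous_general R N m
end

section
/- Let R be a Noetherian ring and A an R-algebra that is intersection flat, meaning that for any family of ideals (I_λ) of R one has ∩_λ (I_λ A) = (∩_λ I_λ) A. Then for any element f ∈ A, the set V_R(f) := {p ∈ Spec R : f ∈ pA} is Zariski closed in Spec R. -/
/-- If `A` is an intersection flat `R`-algebra (arbitrary intersections of ideals of `R`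
commute with extension to `A`), then for any `f ∈ A` the set
`V_R(f) = {p ∈ Spec R : f ∈ pA}` is Zariski closed. -/
theorem intersection_flat_VR_closed
    (R A : Type*) [CommRing R] [IsNoetherianRing R] [CommRing A] [Algebra R A]
    (hint : ∀ S : Set (Ideal R),
      (⨅ J ∈ S, Ideal.map (algebraMap R A) J) = Ideal.map (algebraMap R A) (sInf S))
    (f : A) :
    IsClosed {p : PrimeSpectrum R | f ∈ Ideal.map (algebraMap R A) p.asIdeal} := by
  set V : Set (PrimeSpectrum R) :=
    {p : PrimeSpectrum R | f ∈ Ideal.map (algebraMap R A) p.asIdeal} with hV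
  set S : Set (Ideal R) := PrimeSpectrum.asIdeal '' V with hS
  have hf : f ∈ Ideal.map (algebraMap R A) (sInf S) := by
    rw [← hint S]
    refine Ideal.mem_iInf.mpr fun J => Ideal.mem_iInf.mpr fun hJ => ?_
    obtain ⟨p, hp, rfl⟩ := hJ
    exact hp
  have : V = PrimeSpectrum.zeroLocus ((sInf S : Ideal R) : Set R) := by
    ext p
    rw [PrimeSpectrum.mem_zeroLocus]
    constructor
    · intro hp r hr
      exact (Ideal.mem_sInf.mp hr) ⟨p, hp, rfl⟩
    · intro hp
      exact Ideal.map_mono hp hf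
  rw [this]
  exact PrimeSpectrum.isClosed_zeroLocus _
end
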